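/- arXiv:2407.14141 — 2 statements merged into one kernel-verified Lean document; each statement's English description precedes it below -/
import Mathlib

section
/- Let ⟨·,·⟩ be an inner product on a finite-dimensional space V₁ of vector fields, and let P₁ : L² → V₁ be the projection defined by ⟨P₁(d), a⟩ = ∫ d·a dx for all a ∈ V₁. Then for any a ∈ V₁ and b ∈ V₂ (b square-integrable), ∫ b · P₁(a × P₁(b)) dx = 0, i.e., the projected cross product preserves orthogonality. -/
open MeasureTheory

/-- The projected cross product preserves orthogonality: with `P₁` the
projection onto the finite element space `V₁` defined by
`⟨P₁ d, a⟩ = ∫ d·a` for all `a ∈ V₁` (⟨·,·⟩ a symmetric, possibly mass-lumped,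
inner product), one has `∫ b · P₁(a × P₁ b) = 0` for all `a ∈ V₁` and all
square-integrable `b`. -/
theorem projected_cross_product_orthogonality
    {Ω : Type*} [MeasureSpace Ω]
    (V₁ : Submodule ℝ (Ω → Fin 3 → ℝ))
    (inner1 : (Ω → Fin 3 → ℝ) → (Ω → Fin 3 → ℝ) → ℝ)
    (hsymm : ∀ u v, inner1 u v = inner1 v u)
    (P₁ : (Ω → Fin 3 → ℝ) → (Ω → Fin 3 → ℝ))
    (hPmem : ∀ d, P₁ d ∈ V₁)
    (hPdef : ∀ d, ∀ a ∈ V₁, inner1 (P₁ d) a = ∫ x, ∑ i, d x i * a x i)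
    (a b : Ω → Fin 3 → ℝ) (ha : a ∈ V₁) :
    (∫ x, ∑ i, b x i * P₁ (fun y => crossProduct (a y) (P₁ b y)) x i) = 0 := by
  set c : Ω → Fin 3 → ℝ := fun y => crossProduct (a y) (P₁ b y) with hc
  have h1 : (∫ x, ∑ i, b x i * P₁ c x i) = inner1 (P₁ b) (P₁ c) :=
    (hPdef b (P₁ c) (hPmem c)).symm
  have h2 : inner1 (P₁ c) (P₁ b) = ∫ x, ∑ i, c x i * P₁ b x i :=
    hPdef c (P₁ b) (hPmem b)
  have h3 : ∀ x : Ω, (∑ i, c x i * P₁ b x i) = 0 := by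
    intro x
    simp only [hc, crossProduct, LinearMap.mk₂_apply, Fin.sum_univ_three,
      Matrix.cons_val_zero, Matrix.cons_val_one, Matrix.head_cons,
      Matrix.cons_val_two, Matrix.tail_cons]
    ring
  rw [h1, hsymm, h2]
  simp [h3]
end

section
/- The semi-discrete Alfvénic system with the orthogonality-preserving projected cross product conserves magnetic helicity: if A_h ∈ V₁ satisfies ∇×A_h = B_h and ∂_t B_h = ∇×P₁(v_h × P₁(B_h)), then d/dt ∫ A_h · B_h = 0. -/
/-!
The induction equation makes `∂ₜB_h` a curl, so integrating by parts moves the curl onto `A_h`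
and turns `∫ A_h·∂ₜB_h` into `∫ B_h·P₁(v_h × P₁B_h)`. Since `P₁` is self-adjoint for the `L²`
pairing, this equals `∫ P₁B_h·(v_h × P₁B_h)`, which vanishes pointwise.
-/

open MeasureTheory

theorem integral_sum_mul_proj_comm {Ω ι : Type*} [MeasurableSpace Ω] [Fintype ι]
    {μ : Measure Ω} (inner : (Ω → ι → ℝ) → (Ω → ι → ℝ) → ℝ)
    (hsymm : ∀ u v, inner u v = inner v u) (P : (Ω → ι → ℝ) → (Ω → ι → ℝ))
    (hP : ∀ d e, inner (P d) (P e) = ∫ x, ∑ i, d x i * P e x i ∂μ) (d e : Ω → ι → ℝ) :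
    ∫ x, ∑ i, d x i * P e x i ∂μ = ∫ x, ∑ i, e x i * P d x i ∂μ := by
  rw [← hP, ← hP, hsymm]

theorem integral_sum_crossProduct_mul_self {Ω : Type*} [MeasurableSpace Ω] (μ : Measure Ω)
    (u w : Ω → Fin 3 → ℝ) : ∫ x, ∑ i, crossProduct (u x) (w x) i * w x i ∂μ = 0 := by
  have hpointwise (x : Ω) : ∑ i, crossProduct (u x) (w x) i * w x i = 0 := by
    simpa [dotProduct, mul_comm] using dot_cross_self (u x) (w x)
  simp only [hpointwise, integral_zero]

theorem helicity_conservation_general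
    {Ω : Type*} [MeasureSpace Ω]
    (V₁ : Submodule ℝ (Ω → Fin 3 → ℝ))
    (inner1 : (Ω → Fin 3 → ℝ) → (Ω → Fin 3 → ℝ) → ℝ)
    (hsymm : ∀ u v, inner1 u v = inner1 v u)
    (P₁ : (Ω → Fin 3 → ℝ) → (Ω → Fin 3 → ℝ))
    (hPmem : ∀ d, P₁ d ∈ V₁)
    (hPdef : ∀ d, ∀ a ∈ V₁, inner1 (P₁ d) a = ∫ x, ∑ i, d x i * a x i)
    (Curl : (Ω → Fin 3 → ℝ) → (Ω → Fin 3 → ℝ))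
    (A B B' v : ℝ → Ω → Fin 3 → ℝ)
    (hcurlA : ∀ t, Curl (A t) = B t)
    (hibp : ∀ t (w : Ω → Fin 3 → ℝ),
      (∫ x, ∑ i, A t x i * Curl w x i) = ∫ x, ∑ i, Curl (A t) x i * w x i)
    (hB' : ∀ t x, B' t x =
      Curl (P₁ (fun y => crossProduct (v t y) (P₁ (B t) y))) x)
    (H : ℝ → ℝ)
    (hH' : ∀ t, HasDerivAt H (2 * ∫ x, ∑ i, A t x i * B' t x i) t) :
    ∀ t, HasDerivAt H 0 t := by
  intro t
  set E : Ω → Fin 3 → ℝ := fun y => crossProduct (v t y) (P₁ (B t) y)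
  have hrate : ∫ x, ∑ i, A t x i * B' t x i = 0 :=
    calc ∫ x, ∑ i, A t x i * B' t x i
        = ∫ x, ∑ i, A t x i * Curl (P₁ E) x i := by
          rw [show B' t = Curl (P₁ E) from funext (hB' t)]
      _ = ∫ x, ∑ i, B t x i * P₁ E x i := by rw [hibp, hcurlA]
      _ = ∫ x, ∑ i, E x i * P₁ (B t) x i :=
          integral_sum_mul_proj_comm inner1 hsymm P₁ (fun d e => hPdef d _ (hPmem e)) _ _
      _ = 0 := integral_sum_crossProduct_mul_self _ _ _
  simpa [hrate] using hH' t

/-- Magnetic-helicity conservation of the semi-discrete Alfvénic step with the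
orthogonality-preserving projected cross product: if `∇×A_h = B_h` and
`∂ₜB_h = ∇×P₁(v_h × P₁ B_h)`, then `d/dt ∫ A_h·B_h = 0`. -/
theorem helicity_conservation
    {Ω : Type*} [MeasureSpace Ω]
    (V₁ : Submodule ℝ (Ω → Fin 3 → ℝ))
    (inner1 : (Ω → Fin 3 → ℝ) → (Ω → Fin 3 → ℝ) → ℝ)
    (hsymm : ∀ u v, inner1 u v = inner1 v u)
    (P₁ : (Ω → Fin 3 → ℝ) → (Ω → Fin 3 → ℝ))
    (hPmem : ∀ d, P₁ d ∈ V₁)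
    (hPdef : ∀ d, ∀ a ∈ V₁, inner1 (P₁ d) a = ∫ x, ∑ i, d x i * a x i)
    (Curl : (Ω → Fin 3 → ℝ) → (Ω → Fin 3 → ℝ))
    (A B B' v : ℝ → Ω → Fin 3 → ℝ)
    (hcurlA : ∀ t, Curl (A t) = B t)
    (hibp : ∀ t (w : Ω → Fin 3 → ℝ),
      (∫ x, ∑ i, A t x i * Curl w x i) = ∫ x, ∑ i, Curl (A t) x i * w x i)
    (hB' : ∀ t x, B' t x =
      Curl (P₁ (fun y => crossProduct (v t y) (P₁ (B t) y))) x)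
    (H : ℝ → ℝ)
    (hH : H = fun t => ∫ x, ∑ i, A t x i * B t x i)
    (hH' : ∀ t, HasDerivAt H (2 * ∫ x, ∑ i, A t x i * B' t x i) t) :
    ∀ t, HasDerivAt H 0 t :=
  helicity_conservation_general V₁ inner1 hsymm P₁ hPmem hPdef Curl A B B' v hcurlA hibp hB' H hH'
end
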